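/- For every natural number m ≥ 1, all real numbers γ and δ, and every real number τ with 0 < τ ≤ 1, the quantity δ·τ·∫_τ^1 (1 - (1-t)^{m-1})/t dt + γ·∫_τ^1 (1-t)^{m-1} dt equals δ·τ·Σ_{i=1}^{m-1} C(m-1,i)·(-1)^{i+1}·(1 - τ^i)/i + γ·(1-τ)^m/m. -/

import Mathlib

/-!
Expanding `(1 - t) ^ (m - 1)` by the binomial theorem turns `(1 - (1 - t) ^ (m - 1)) / t` into a
polynomial in `t`, which is integrated term by term; the second integral is elementary after the
substitution `t ↦ 1 - t`.
-/

open Finset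

theorem sum_Icc_choose_mul_neg_one_pow_mul_pow {R : Type*} [CommRing R] (n : ℕ) (t : R) :
    ∑ i ∈ Icc 1 n, (n.choose i : R) * (-1) ^ (i + 1) * t ^ i = 1 - (1 - t) ^ n := by
  have hbinom := add_pow (-t) 1 n
  rw [range_eq_Ico, sum_eq_sum_Ico_succ_bot (Nat.zero_lt_succ n), zero_add, Nat.succ_eq_add_one,
    Ico_add_one_right_eq_Icc] at hbinom
  rw [← neg_add_eq_sub t 1, hbinom]
  simp only [pow_zero, one_pow, Nat.choose_zero_right, Nat.cast_one, mul_one, sub_add_cancel_left,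
    ← sum_neg_distrib]
  refine sum_congr rfl fun i _ => ?_
  rw [neg_pow]
  ring

theorem one_sub_one_sub_pow_div_eq_sum {K : Type*} [Field K] (n : ℕ) {t : K} (ht : t ≠ 0) :
    (1 - (1 - t) ^ n) / t = ∑ i ∈ Icc 1 n, (n.choose i : K) * (-1) ^ (i + 1) * t ^ (i - 1) := by
  rw [← sum_Icc_choose_mul_neg_one_pow_mul_pow, sum_div]
  refine sum_congr rfl fun i hi => ?_
  obtain ⟨j, rfl⟩ := Nat.exists_eq_add_of_le' (mem_Icc.mp hi).1
  rw [Nat.add_sub_cancel]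
  field_simp
  ring

/-- The integrand is a polynomial off the null set `{0}` (at `0` it takes the junk value
`x / 0 = 0`). -/
theorem integral_one_sub_one_sub_pow_div (n : ℕ) (a b : ℝ) :
    ∫ t in a..b, (1 - (1 - t) ^ n) / t
      = ∑ i ∈ Icc 1 n, (n.choose i : ℝ) * (-1) ^ (i + 1) * (b ^ i - a ^ i) / i := by
  have hpoly : ∀ᵐ t, t ∈ Set.uIoc a b →
      (1 - (1 - t) ^ n) / t = ∑ i ∈ Icc 1 n, (n.choose i : ℝ) * (-1) ^ (i + 1) * t ^ (i - 1) := by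
    filter_upwards [MeasureTheory.volume.ae_ne 0] with t ht _
    exact one_sub_one_sub_pow_div_eq_sum n ht
  rw [intervalIntegral.integral_congr_ae hpoly, intervalIntegral.integral_finsetSum
    fun i _ => Continuous.intervalIntegrable (by fun_prop) _ _]
  refine sum_congr rfl fun i hi => ?_
  rw [intervalIntegral.integral_const_mul, integral_pow, Nat.sub_add_cancel (mem_Icc.mp hi).1]
  push_cast [Nat.cast_sub (mem_Icc.mp hi).1]
  ring

theorem integral_one_sub_pow (n : ℕ) (a b : ℝ) :
    ∫ t in a..b, (1 - t) ^ n = ((1 - a) ^ (n + 1) - (1 - b) ^ (n + 1)) / (n + 1) := by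
  rw [intervalIntegral.integral_comp_sub_left (fun x => x ^ n), integral_pow]

theorem stmt_16_general (m : ℕ) (hm : 1 ≤ m) (γ δ τ : ℝ) :
    δ * τ * (∫ t in τ..1, (1 - (1 - t) ^ (m - 1)) / t)
        + γ * (∫ t in τ..1, (1 - t) ^ (m - 1)) =
      δ * τ * (∑ i ∈ Finset.Icc 1 (m - 1),
          ((m - 1).choose i : ℝ) * (-1) ^ (i + 1) * (1 - τ ^ i) / i)
        + γ * (1 - τ) ^ m / m := by
  obtain ⟨n, rfl⟩ := Nat.exists_eq_add_of_le' hm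
  rw [Nat.add_sub_cancel, integral_one_sub_one_sub_pow_div, integral_one_sub_pow]
  simp only [one_pow, sub_self, zero_pow n.succ_ne_zero, sub_zero]
  push_cast
  ring

theorem stmt_16 (m : ℕ) (hm : 1 ≤ m) (γ δ τ : ℝ) (hτ : 0 < τ) (hτ1 : τ ≤ 1) :
    δ * τ * (∫ t in τ..1, (1 - (1 - t) ^ (m - 1)) / t)
        + γ * (∫ t in τ..1, (1 - t) ^ (m - 1)) =
      δ * τ * (∑ i ∈ Finset.Icc 1 (m - 1),
          ((m - 1).choose i : ℝ) * (-1) ^ (i + 1) * (1 - τ ^ i) / i)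
        + γ * (1 - τ) ^ m / m :=
  stmt_16_general m hm γ δ τ
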